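/- Let n ≥ 1 and let S be a left-handed skew Boolean algebra generated by n distinct elements x_1,…,x_n. Then |S| ≤ ∏_{m=1}^{n} (m+1)^{C(n,m)}, and equality holds if and only if S is freely generated by {x_1,…,x_n}. -/

import Mathlib

universe u

/-- A skew Boolean algebra. -/
class SBA (S : Type u) where
  wedge : S → S → S
  vee : S → S → S
  diff : S → S → S
  zero : S
  wedge_assoc : ∀ x y z : S, wedge (wedge x y) z = wedge x (wedge y z)
  vee_assoc : ∀ x y z : S, vee (vee x y) z = vee x (vee y z)
  absorb1 : ∀ x y : S, wedge x (vee x y) = x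
  absorb2 : ∀ x y : S, wedge (vee y x) x = x
  absorb3 : ∀ x y : S, vee x (wedge x y) = x
  absorb4 : ∀ x y : S, vee (wedge y x) x = x
  sdistrib1 : ∀ x y z : S, wedge x (vee y z) = vee (wedge x y) (wedge x z)
  sdistrib2 : ∀ x y z : S, wedge (vee x y) z = vee (wedge x z) (wedge y z)
  zero_wedge : ∀ x : S, wedge zero x = zero
  wedge_zero : ∀ x : S, wedge x zero = zero
  zero_vee : ∀ x : S, vee zero x = x
  vee_zero : ∀ x : S, vee x zero = x
  diff_ax1 : ∀ x y : S, vee (wedge (wedge x y) x) (diff x y) = x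
  diff_ax2 : ∀ x y : S, wedge (wedge (wedge x y) x) (diff x y) = zero
  diff_ax3 : ∀ x y : S, wedge (diff x y) (wedge (wedge x y) x) = zero

namespace SBA

scoped infixl:70 " ⋏ " => SBA.wedge
scoped infixl:65 " ⋎ " => SBA.vee
scoped infixl:70 " ∖ " => SBA.diff

variable {S : Type u} [SBA S]

/-- Green's relation `D`: `x D y` iff `x⋏y⋏x = x` and `y⋏x⋏y = y`. -/
def Drel (x y : S) : Prop := x ⋏ y ⋏ x = x ∧ y ⋏ x ⋏ y = y

/-- The natural partial order: `x ≤ y` iff `x⋏y = x = y⋏x`. -/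
def nle (x y : S) : Prop := x ⋏ y = x ∧ y ⋏ x = x

/-- An atom: a nonzero element with nothing strictly between it and `0`. -/
def IsAtom (a : S) : Prop := a ≠ zero ∧ ∀ x : S, nle x a → x = zero ∨ x = a

/-- `X` generates `S`: the only subset of `S` containing `X` and `0` and closed
under the three operations is `S` itself. -/
def Generates (X : Set S) : Prop :=
  ∀ T : Set S, X ⊆ T → zero ∈ T →
    (∀ a b : S, a ∈ T → b ∈ T → a ⋏ b ∈ T ∧ a ⋎ b ∈ T ∧ a ∖ b ∈ T) →
    T = Set.univ

/-- A homomorphism of skew Boolean algebras. -/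
def IsHom {T : Type u} [SBA T] (f : S → T) : Prop :=
  (∀ a b : S, f (a ⋏ b) = f a ⋏ f b) ∧ (∀ a b : S, f (a ⋎ b) = f a ⋎ f b) ∧
    (∀ a b : S, f (a ∖ b) = f a ∖ f b) ∧ f zero = zero

end SBA

open SBA

/-- A left-handed skew Boolean algebra. -/
class LeftHanded (S : Type u) [SBA S] : Prop where
  lh_wedge : ∀ x y : S, x ⋏ y ⋏ x = x ⋏ y
  lh_vee : ∀ x y : S, x ⋎ y ⋎ x = y ⋎ x

/-- `S` is freely generated by `X` over the variety of all skew Boolean algebras. -/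
def FreelyGenerates (S : Type u) [SBA S] (X : Set S) : Prop :=
  Generates X ∧
    ∀ (T : Type u) [SBA T], ∀ g : X → T,
      ∃ f : S → T, IsHom f ∧ ∀ x : X, f x = g x

/-- `S` is freely generated by `X` over the variety of left-handed skew Boolean algebras. -/
def LFreelyGenerates (S : Type u) [SBA S] [LeftHanded S] (X : Set S) : Prop :=
  Generates X ∧
    ∀ (T : Type u) [SBA T] [LeftHanded T], ∀ g : X → T,
      ∃ f : S → T, IsHom f ∧ ∀ x : X, f x = g x

/-!
Let `F` be the product, over all subsets `A` of the `n` generators, of the primitive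
left-handed algebra `A ∪ {0}`; it has `∏_A (|A| + 1) = ∏_m (m + 1)^(n choose m)` elements.
Given elements `g i` of a left-handed skew Boolean algebra `T`, every `x ∈ T` is the join of its
Venn cells `x ⋏ ⋀_{j ∈ A} g j ∖ ⋁_{j ∉ A} g j`, cells along different `A` are orthogonal, and
the cells of the `g i` along a fixed `A` all satisfy `u ⋏ v = u`. Sending `i` in the
`A`-component of `F` to the cell of `g i` along `A`, and joining over `A`, is therefore a
homomorphism `F → T` extending `g`, so `F` is free on `n` generators. A generated algebra `S`
is thus a quotient of `F`, and `|S| = |F|` exactly when the quotient map is bijective, i.e. when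
`S` is free.
-/

universe v w

namespace SBA

section Identities

variable {T : Type v} [SBA T]

theorem wedge_self (x : T) : x ⋏ x = x := by
  simpa only [absorb3] using absorb1 x (x ⋏ x)

theorem vee_self (x : T) : x ⋎ x = x := by
  simpa only [absorb1] using absorb3 x (x ⋎ x)

theorem wedge_eq_zero_symm {a b : T} (h : a ⋏ b = zero) : b ⋏ a = zero := by
  rw [← wedge_self (b ⋏ a), wedge_assoc, ← wedge_assoc a, h, zero_wedge, wedge_zero]

theorem vee_eq_right_of_wedge_eq {a b : T} (h : a ⋏ b = a) : a ⋎ b = b := by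
  simpa only [h] using absorb4 b a

theorem eq_zero_of_wedge_eq_self {c a b : T} (ha : c ⋏ a = c) (hb : c ⋏ b = c)
    (hab : a ⋏ b = zero) : c = zero := by
  rw [← hb, ← ha, wedge_assoc, hab, wedge_zero]

variable [LeftHanded T]

theorem wedge_vee_diff (x y : T) : (x ⋏ y) ⋎ (x ∖ y) = x := by
  simpa only [LeftHanded.lh_wedge] using diff_ax1 x y

theorem wedge_wedge_diff (x y : T) : (x ⋏ y) ⋏ (x ∖ y) = zero := by
  simpa only [LeftHanded.lh_wedge] using diff_ax2 x y

theorem diff_wedge_wedge (x y : T) : (x ∖ y) ⋏ (x ⋏ y) = zero := by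
  simpa only [LeftHanded.lh_wedge] using diff_ax3 x y

theorem self_wedge_diff (x y : T) : x ⋏ (x ∖ y) = x ∖ y := by
  nth_rw 1 [← wedge_vee_diff x y]
  rw [sdistrib2, wedge_wedge_diff, wedge_self, zero_vee]

theorem diff_wedge_self (x y : T) : (x ∖ y) ⋏ x = x ∖ y := by
  nth_rw 2 [← wedge_vee_diff x y]
  rw [sdistrib1, diff_wedge_wedge, wedge_self, zero_vee]

theorem diff_wedge_right (x y : T) : (x ∖ y) ⋏ y = zero := by
  rw [← diff_wedge_self, wedge_assoc, diff_wedge_wedge]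

theorem zero_diff (y : T) : zero ∖ y = (zero : T) := by
  simpa only [zero_wedge, zero_vee] using wedge_vee_diff (zero : T) y

theorem vee_comm_of_wedge_eq_zero {a b : T} (h : b ⋏ a = zero) : a ⋎ b = b ⋎ a := by
  have hba : (a ⋎ b) ⋏ a = a := by rw [sdistrib2, h, wedge_self, vee_zero]
  calc a ⋎ b = (a ⋎ b) ⋎ ((a ⋎ b) ⋏ a) := (absorb3 _ _).symm
    _ = b ⋎ a := by rw [hba, LeftHanded.lh_vee]

theorem wedge_eq_zero_of_separated {a b c : T} (ha : a ⋏ c = a) (hb : b ⋏ c = zero) :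
    a ⋏ b = zero := by
  refine eq_zero_of_wedge_eq_self (a := b) (b := c) ?_ ?_ hb
  · rw [wedge_assoc, wedge_self]
  · rw [← ha, wedge_assoc, wedge_assoc, ← wedge_assoc c, LeftHanded.lh_wedge, wedge_assoc]

theorem eq_diff_of_vee_eq {x y z : T} (hz : z ⋏ x = z) (hvee : (x ⋏ y) ⋎ z = x)
    (horth : z ⋏ (x ⋏ y) = zero) : z = x ∖ y := by
  have h₁ : z = z ⋏ (x ∖ y) := by
    conv_lhs => rw [← hz, ← wedge_vee_diff x y, sdistrib1, horth, zero_vee]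
  have h₂ : x ∖ y = z ⋏ (x ∖ y) :=
    calc x ∖ y = ((x ⋏ y) ⋎ z) ⋏ (x ∖ y) := by rw [hvee, self_wedge_diff]
      _ = z ⋏ (x ∖ y) := by rw [sdistrib2, wedge_wedge_diff, zero_vee]
  rw [h₁, ← h₂]

theorem wedge_wedge_eq_self_iff {e x a : T} : e ⋏ (x ⋏ a) = e ↔ e ⋏ x = e ∧ e ⋏ a = e := by
  refine ⟨fun h => ⟨?_, ?_⟩, fun ⟨hx, ha⟩ => by rw [← wedge_assoc, hx, ha]⟩
  · rw [← h, wedge_assoc, LeftHanded.lh_wedge]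
  · rw [← h, wedge_assoc, wedge_assoc, wedge_self]

theorem wedge_diff_eq_self_iff {e x a : T} : e ⋏ (x ∖ a) = e ↔ e ⋏ x = e ∧ e ⋏ a = zero := by
  refine ⟨fun h => ⟨?_, ?_⟩, fun ⟨hx, ha⟩ => ?_⟩
  · rw [← h, wedge_assoc, diff_wedge_self]
  · rw [← h, wedge_assoc, diff_wedge_right, wedge_zero]
  · conv_rhs => rw [← hx, ← wedge_vee_diff x a, sdistrib1, ← wedge_assoc, hx, ha, zero_vee]

end Identities

section Homomorphisms

variable {S T R : Type v} [SBA S] [SBA T] [SBA R]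

theorem isHom_id : IsHom (id : S → S) :=
  ⟨fun _ _ => rfl, fun _ _ => rfl, fun _ _ => rfl, rfl⟩

theorem IsHom.comp {f : S → T} {h : T → R} (hh : IsHom h) (hf : IsHom f) : IsHom (h ∘ f) :=
  ⟨fun a b => by simp only [Function.comp, hf.1, hh.1],
    fun a b => by simp only [Function.comp, hf.2.1, hh.2.1],
    fun a b => by simp only [Function.comp, hf.2.2.1, hh.2.2.1],
    by simp only [Function.comp, hf.2.2.2, hh.2.2.2]⟩

theorem IsHom.symm_ofBijective {f : S → T} (hf : IsHom f) (hbij : Function.Bijective f) :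
    IsHom (Equiv.ofBijective f hbij).symm := by
  have he : ∀ t, f ((Equiv.ofBijective f hbij).symm t) = t :=
    (Equiv.ofBijective f hbij).apply_symm_apply
  refine ⟨fun a b => ?_, fun a b => ?_, fun a b => ?_, ?_⟩ <;> apply hbij.injective
  · rw [he, hf.1, he, he]
  · rw [he, hf.2.1, he, he]
  · rw [he, hf.2.2.1, he, he]
  · rw [he, hf.2.2.2]

theorem isHom_const_zero [LeftHanded T] : IsHom (fun _ : S => (zero : T)) :=
  ⟨fun _ _ => (wedge_self _).symm, fun _ _ => (vee_self _).symm,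
    fun _ _ => (zero_diff _).symm, rfl⟩

theorem isHom_of_wedge_vee [LeftHanded S] [LeftHanded T] {f : S → T}
    (hw : ∀ a b, f (a ⋏ b) = f a ⋏ f b) (hv : ∀ a b, f (a ⋎ b) = f a ⋎ f b)
    (h0 : f zero = zero) : IsHom f := by
  refine ⟨hw, hv, fun a b => eq_diff_of_vee_eq ?_ ?_ ?_, h0⟩
  · rw [← hw, diff_wedge_self]
  · rw [← hw, ← hv, wedge_vee_diff]
  · rw [← hw, ← hw, diff_wedge_wedge, h0]

def IsSubalgebra (B : Set S) : Prop :=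
  zero ∈ B ∧ ∀ a b : S, a ∈ B → b ∈ B → a ⋏ b ∈ B ∧ a ⋎ b ∈ B ∧ a ∖ b ∈ B

theorem Generates.eq_univ {X B : Set S} (hX : Generates X) (hXB : X ⊆ B) (hB : IsSubalgebra B) :
    B = Set.univ :=
  hX B hXB hB.1 hB.2

theorem IsHom.isSubalgebra_range {f : S → T} (hf : IsHom f) : IsSubalgebra (Set.range f) := by
  refine ⟨⟨zero, hf.2.2.2⟩, ?_⟩
  rintro _ _ ⟨a, rfl⟩ ⟨b, rfl⟩
  exact ⟨⟨a ⋏ b, hf.1 a b⟩, ⟨a ⋎ b, hf.2.1 a b⟩, ⟨a ∖ b, hf.2.2.1 a b⟩⟩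

theorem IsHom.isSubalgebra_eqLocus {f h : S → T} (hf : IsHom f) (hh : IsHom h) :
    IsSubalgebra {s | f s = h s} := by
  refine ⟨(hf.2.2.2).trans hh.2.2.2.symm, fun a b (ha : f a = h a) (hb : f b = h b) => ?_⟩
  exact ⟨show f (a ⋏ b) = h (a ⋏ b) by rw [hf.1, hh.1, ha, hb],
    show f (a ⋎ b) = h (a ⋎ b) by rw [hf.2.1, hh.2.1, ha, hb],
    show f (a ∖ b) = h (a ∖ b) by rw [hf.2.2.1, hh.2.2.1, ha, hb]⟩

theorem IsHom.surjective_of_generates {f : S → T} (hf : IsHom f) {X : Set T}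
    (hX : Generates X) (hXf : X ⊆ Set.range f) : Function.Surjective f :=
  Set.range_eq_univ.mp (hX.eq_univ hXf hf.isSubalgebra_range)

theorem IsHom.eq_of_generates {f h : S → T} (hf : IsHom f) (hh : IsHom h) {X : Set S}
    (hX : Generates X) (hfh : ∀ s ∈ X, f s = h s) : f = h :=
  funext (Set.eq_univ_iff_forall.mp (hX.eq_univ hfh (hf.isSubalgebra_eqLocus hh)))

end Homomorphisms

section BigVee

variable {S T : Type v} [SBA S] [SBA T]

def bigVee (l : List T) : T := l.foldr (· ⋎ ·) zero

@[simp] theorem bigVee_nil : bigVee ([] : List T) = zero := rfl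

@[simp] theorem bigVee_cons (a : T) (l : List T) : bigVee (a :: l) = a ⋎ bigVee l := rfl

theorem bigVee_append (l₁ l₂ : List T) : bigVee (l₁ ++ l₂) = bigVee l₁ ⋎ bigVee l₂ := by
  induction l₁ with
  | nil => simp only [List.nil_append, bigVee_nil, zero_vee]
  | cons a l ih => simp only [List.cons_append, bigVee_cons, ih, vee_assoc]

theorem bigVee_eq_zero {l : List T} (h : ∀ a ∈ l, a = zero) : bigVee l = zero := by
  induction l with
  | nil => rfl
  | cons a l ih =>
    rw [List.forall_mem_cons] at h
    rw [bigVee_cons, h.1, ih h.2, zero_vee]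

theorem wedge_bigVee (x : T) (l : List T) : x ⋏ bigVee l = bigVee (l.map (x ⋏ ·)) := by
  induction l with
  | nil => exact wedge_zero x
  | cons a l ih => rw [bigVee_cons, sdistrib1, ih, List.map_cons, bigVee_cons]

theorem IsHom.map_bigVee {f : S → T} (hf : IsHom f) (l : List S) :
    f (bigVee l) = bigVee (l.map f) := by
  induction l with
  | nil => exact hf.2.2.2
  | cons a l ih => rw [bigVee_cons, hf.2.1, ih, List.map_cons, bigVee_cons]

theorem IsSubalgebra.bigVee_mem {B : Set T} (hB : IsSubalgebra B) {l : List T}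
    (h : ∀ a ∈ l, a ∈ B) : bigVee l ∈ B := by
  induction l with
  | nil => exact hB.1
  | cons a l ih =>
    rw [List.forall_mem_cons] at h
    exact (hB.2 _ _ h.1 (ih h.2)).2.1

theorem bigVee_map_ite_eq {κ : Type w} [DecidableEq κ] {L : List κ} {k : κ} (hk : k ∈ L)
    (t : T) : bigVee (L.map fun k' => if k' = k then t else zero) = t := by
  induction L with
  | nil => simp at hk
  | cons k' L ih =>
    rw [List.map_cons, bigVee_cons]
    by_cases hkL : k ∈ L
    · rw [ih hkL]
      split_ifs
      · exact vee_self t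
      · exact zero_vee t
    · obtain rfl : k = k' := (List.mem_cons.mp hk).resolve_right hkL
      rw [if_pos rfl, bigVee_eq_zero, vee_zero]
      simp only [List.mem_map]
      rintro _ ⟨k'', hk'', rfl⟩
      exact if_neg (by rintro rfl; exact hkL hk'')

variable [LeftHanded S] [LeftHanded T]

theorem isHom_vee_of_orthogonal {f f' : S → T} (hf : IsHom f) (hf' : IsHom f')
    (horth : ∀ u v, f u ⋏ f' v = zero) : IsHom fun s => f s ⋎ f' s := by
  have horth' : ∀ u v, f' v ⋏ f u = zero := fun u v => wedge_eq_zero_symm (horth u v)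
  refine isHom_of_wedge_vee (fun a b => ?_) (fun a b => ?_) ?_
  · simp only [hf.1, hf'.1, sdistrib1, sdistrib2, horth, horth', vee_zero, zero_vee]
  · rw [hf.2.1, hf'.2.1, vee_assoc, vee_assoc, ← vee_assoc (f' a),
      vee_comm_of_wedge_eq_zero (horth b a), vee_assoc]
  · rw [hf.2.2.2, hf'.2.2.2, zero_vee]

theorem isHom_bigVee {κ : Type w} (L : List κ) {φ : κ → S → T} (hφ : ∀ k, IsHom (φ k))
    (horth : L.Pairwise fun k k' => ∀ u v, φ k u ⋏ φ k' v = zero) :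
    IsHom fun s => bigVee (L.map (φ · s)) := by
  induction L with
  | nil => exact isHom_const_zero
  | cons k L ih =>
    rw [List.pairwise_cons] at horth
    simp only [List.map_cons, bigVee_cons]
    refine isHom_vee_of_orthogonal (hφ k) (ih horth.2) fun u v => ?_
    rw [wedge_bigVee, List.map_map]
    refine bigVee_eq_zero ?_
    simp only [List.mem_map, Function.comp]
    rintro _ ⟨k', hk', rfl⟩
    exact horth.1 k' hk' u v

end BigVee

section Cells

variable {ι : Type w} [DecidableEq ι] {T : Type v} [SBA T]

def cut (g : ι → T) (A : Finset ι) (x : T) (j : ι) : T :=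
  if j ∈ A then x ⋏ g j else x ∖ g j

/-- The cell `x ⋏ ⋀_{j ∈ A} g j ∖ ⋁_{j ∉ A} g j` of the Venn diagram of the `g j`, `j ∈ l`,
obtained by cutting `x` along the `g j` one at a time in the order of `l`. -/
def cell (g : ι → T) (A : Finset ι) (x : T) (l : List ι) : T :=
  l.foldl (cut g A) x

variable (g : ι → T)

@[simp] theorem cell_nil (A : Finset ι) (x : T) : cell g A x [] = x := rfl

@[simp] theorem cell_cons (A : Finset ι) (x : T) (j : ι) (l : List ι) :
    cell g A x (j :: l) = cell g A (cut g A x j) l := rfl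

theorem cell_congr {A B : Finset ι} (x : T) {l : List ι} (h : ∀ j ∈ l, j ∈ A ↔ j ∈ B) :
    cell g A x l = cell g B x l := by
  induction l generalizing x with
  | nil => rfl
  | cons j l ih =>
    rw [List.forall_mem_cons] at h
    simp only [cell_cons, cut, h.1, ih _ h.2]

theorem IsHom.map_cell {S : Type v} [SBA S] {f : T → S} (hf : IsHom f) (A : Finset ι) (x : T)
    (l : List ι) : f (cell g A x l) = cell (f ∘ g) A (f x) l := by
  induction l generalizing x with
  | nil => rfl
  | cons j l ih =>
    simp only [cell_cons, ih, cut]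
    split_ifs
    · rw [hf.1, Function.comp_apply]
    · rw [hf.2.2.1, Function.comp_apply]

theorem IsSubalgebra.cell_mem {B : Set T} (hB : IsSubalgebra B) (hg : ∀ j, g j ∈ B)
    (A : Finset ι) {x : T} (hx : x ∈ B) (l : List ι) : cell g A x l ∈ B := by
  induction l generalizing x with
  | nil => exact hx
  | cons j l ih =>
    refine ih ?_
    unfold cut
    split_ifs
    · exact (hB.2 _ _ hx (hg j)).1
    · exact (hB.2 _ _ hx (hg j)).2.2

variable [LeftHanded T]

theorem wedge_cell_eq_self_iff {A : Finset ι} {e x : T} {l : List ι} :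
    e ⋏ cell g A x l = e ↔ e ⋏ x = e ∧ ∀ j ∈ l, e ⋏ g j = if j ∈ A then e else zero := by
  induction l generalizing x with
  | nil => simp
  | cons j l ih =>
    rw [cell_cons, ih, List.forall_mem_cons, ← and_assoc]
    refine and_congr_left' ?_
    unfold cut
    split_ifs
    · exact wedge_wedge_eq_self_iff
    · exact wedge_diff_eq_self_iff

theorem cell_wedge_self (A : Finset ι) (x : T) (l : List ι) : cell g A x l ⋏ x = cell g A x l :=
  ((wedge_cell_eq_self_iff g).mp (wedge_self _)).1

theorem cell_wedge_of_mem {A : Finset ι} (x : T) {l : List ι} {j : ι} (hjl : j ∈ l) :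
    cell g A x l ⋏ g j = if j ∈ A then cell g A x l else zero :=
  ((wedge_cell_eq_self_iff g).mp (wedge_self _)).2 j hjl

theorem cell_wedge_cell_eq_self {A : Finset ι} (x : T) {l : List ι} {j : ι} (hjA : j ∈ A)
    (hjl : j ∈ l) : cell g A x l ⋏ cell g A (g j) l = cell g A x l := by
  refine (wedge_cell_eq_self_iff g).mpr ⟨?_, fun k hk => cell_wedge_of_mem g x hk⟩
  rw [cell_wedge_of_mem g x hjl, if_pos hjA]

theorem cell_wedge_cell_eq_zero {A B : Finset ι} (x y : T) {l : List ι} {k : ι} (hkl : k ∈ l)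
    (hkA : k ∈ A) (hkB : k ∉ B) : cell g A x l ⋏ cell g B y l = zero :=
  wedge_eq_zero_of_separated (c := g k) (by rw [cell_wedge_of_mem g x hkl, if_pos hkA])
    (by rw [cell_wedge_of_mem g y hkl, if_neg hkB])

theorem cell_eq_zero {A : Finset ι} {l : List ι} {i : ι} (hil : i ∈ l) (hiA : i ∉ A) :
    cell g A (g i) l = zero := by
  rw [← cell_wedge_self g A (g i) l, cell_wedge_of_mem g _ hil, if_neg hiA]

end Cells

section PowersetList

variable {ι : Type w} [DecidableEq ι]

def powersetList : List ι → List (Finset ι)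
  | [] => [∅]
  | j :: l => (powersetList l).map (insert j) ++ powersetList l

theorem mem_powersetList {l : List ι} {A : Finset ι} : A ∈ powersetList l ↔ ∀ j ∈ A, j ∈ l := by
  induction l generalizing A with
  | nil => simp [powersetList, Finset.eq_empty_iff_forall_notMem]
  | cons j l ih =>
    simp only [powersetList, List.mem_append, List.mem_map, ih, List.mem_cons]
    constructor
    · rintro (⟨B, hB, rfl⟩ | hA) k hk
      · rcases Finset.mem_insert.mp hk with rfl | hk
        exacts [Or.inl rfl, Or.inr (hB k hk)]
      · exact Or.inr (hA k hk)
    · intro hA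
      by_cases hjA : j ∈ A
      · refine Or.inl ⟨A.erase j, fun k hk => ?_, Finset.insert_erase hjA⟩
        exact (hA k (Finset.mem_of_mem_erase hk)).resolve_left (Finset.ne_of_mem_erase hk)
      · exact Or.inr fun k hk => (hA k hk).resolve_left (by rintro rfl; exact hjA hk)

theorem nodup_powersetList {l : List ι} (hl : l.Nodup) : (powersetList l).Nodup := by
  induction l with
  | nil => exact List.nodup_singleton _
  | cons j l ih =>
    obtain ⟨hjl, hl⟩ := List.nodup_cons.mp hl
    have hj : ∀ B ∈ powersetList l, j ∉ B := fun B hB hjB => hjl (mem_powersetList.mp hB j hjB)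
    refine List.nodup_append.mpr ⟨(ih hl).map_on fun B hB C hC hBC => ?_, ih hl, ?_⟩
    · rw [← Finset.erase_insert (hj B hB), hBC, Finset.erase_insert (hj C hC)]
    · simp only [List.mem_map]
      rintro _ ⟨B, -, rfl⟩ C hC rfl
      exact hj _ hC (Finset.mem_insert_self j B)

variable {T : Type v} [SBA T] [LeftHanded T]

theorem bigVee_cell (g : ι → T) (x : T) {l : List ι} (hl : l.Nodup) :
    bigVee ((powersetList l).map fun A => cell g A x l) = x := by
  induction l generalizing x with
  | nil => exact vee_zero x
  | cons j l ih =>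
    obtain ⟨hjl, hl⟩ := List.nodup_cons.mp hl
    have hinsert : ∀ B ∈ powersetList l,
        ((fun A => cell g A x (j :: l)) ∘ insert j) B = cell g B (x ⋏ g j) l := fun B _ => by
      rw [Function.comp_apply, cell_cons, cut, if_pos (Finset.mem_insert_self j B)]
      refine cell_congr g _ fun k hk => ?_
      rw [Finset.mem_insert, or_iff_right (by rintro rfl; exact hjl hk)]
    have hnotin : ∀ B ∈ powersetList l, cell g B x (j :: l) = cell g B (x ∖ g j) l :=
      fun B hB => by
        rw [cell_cons, cut, if_neg fun hjB => hjl (mem_powersetList.mp hB j hjB)]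
    rw [powersetList, List.map_append, List.map_map, bigVee_append,
      List.map_congr_left hinsert, List.map_congr_left hnotin, ih _ hl, ih _ hl, wedge_vee_diff]

end PowersetList

section Instances

/-- `Option α` as the primitive left-handed skew Boolean algebra on `α ∪ {0}`. -/
instance {α : Type v} : SBA (Option α) where
  wedge a b := match b with | none => none | some _ => a
  vee a b := match b with | none => a | some _ => b
  diff a b := match b with | none => a | some _ => none
  zero := none
  wedge_assoc x y z := by cases x <;> cases y <;> cases z <;> rfl
  vee_assoc x y z := by cases x <;> cases y <;> cases z <;> rfl
  absorb1 x y := by cases x <;> cases y <;> rfl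
  absorb2 x y := by cases x <;> cases y <;> rfl
  absorb3 x y := by cases x <;> cases y <;> rfl
  absorb4 x y := by cases x <;> cases y <;> rfl
  sdistrib1 x y z := by cases x <;> cases y <;> cases z <;> rfl
  sdistrib2 x y z := by cases x <;> cases y <;> cases z <;> rfl
  zero_wedge x := by cases x <;> rfl
  wedge_zero x := by cases x <;> rfl
  zero_vee x := by cases x <;> rfl
  vee_zero x := by cases x <;> rfl
  diff_ax1 x y := by cases x <;> cases y <;> rfl
  diff_ax2 x y := by cases x <;> cases y <;> rfl
  diff_ax3 x y := by cases x <;> cases y <;> rfl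

instance {α : Type v} : LeftHanded (Option α) where
  lh_wedge x y := by cases x <;> cases y <;> rfl
  lh_vee x y := by cases x <;> cases y <;> rfl

instance {ι : Type w} {β : ι → Type v} [∀ i, SBA (β i)] : SBA (∀ i, β i) where
  wedge u v i := u i ⋏ v i
  vee u v i := u i ⋎ v i
  diff u v i := u i ∖ v i
  zero _ := zero
  wedge_assoc _ _ _ := funext fun _ => wedge_assoc _ _ _
  vee_assoc _ _ _ := funext fun _ => vee_assoc _ _ _
  absorb1 _ _ := funext fun _ => absorb1 _ _
  absorb2 _ _ := funext fun _ => absorb2 _ _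
  absorb3 _ _ := funext fun _ => absorb3 _ _
  absorb4 _ _ := funext fun _ => absorb4 _ _
  sdistrib1 _ _ _ := funext fun _ => sdistrib1 _ _ _
  sdistrib2 _ _ _ := funext fun _ => sdistrib2 _ _ _
  zero_wedge _ := funext fun _ => zero_wedge _
  wedge_zero _ := funext fun _ => wedge_zero _
  zero_vee _ := funext fun _ => zero_vee _
  vee_zero _ := funext fun _ => vee_zero _
  diff_ax1 _ _ := funext fun _ => diff_ax1 _ _
  diff_ax2 _ _ := funext fun _ => diff_ax2 _ _
  diff_ax3 _ _ := funext fun _ => diff_ax3 _ _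

instance {ι : Type w} {β : ι → Type v} [∀ i, SBA (β i)] [∀ i, LeftHanded (β i)] :
    LeftHanded (∀ i, β i) where
  lh_wedge _ _ := funext fun _ => LeftHanded.lh_wedge _ _
  lh_vee _ _ := funext fun _ => LeftHanded.lh_vee _ _

theorem isHom_eval {ι : Type w} {β : ι → Type (max w v)} [∀ i, SBA (β i)] (i : ι) :
    IsHom fun f : ∀ i, β i => f i :=
  ⟨fun _ _ => rfl, fun _ _ => rfl, fun _ _ => rfl, rfl⟩

end Instances

section Primitive

variable {α : Type v}

@[simp] theorem option_wedge_none (a : Option α) : a ⋏ none = none := rfl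
@[simp] theorem option_wedge_some (a : Option α) (b : α) : a ⋏ some b = a := rfl
@[simp] theorem option_diff_none (a : Option α) : a ∖ none = a := rfl
@[simp] theorem option_diff_some (a : Option α) (b : α) : a ∖ some b = none := rfl

theorem isHom_option_elim {T : Type v} [SBA T] [LeftHanded T] {φ : α → T}
    (hφ : ∀ a b, φ a ⋏ φ b = φ a) : IsHom fun o : Option α => o.elim zero φ := by
  refine isHom_of_wedge_vee (fun a b => ?_) (fun a b => ?_) rfl
  · cases a <;> cases b
    exacts [(wedge_self _).symm, (zero_wedge _).symm, (wedge_zero _).symm, (hφ _ _).symm]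
  · cases a <;> cases b
    exacts [(vee_self _).symm, (zero_vee _).symm, (vee_zero _).symm,
      (vee_eq_right_of_wedge_eq (hφ _ _)).symm]

variable {ι : Type w} [DecidableEq ι]

theorem cell_option (h : ι → Option α) (A : Finset ι) (o : Option α) (l : List ι) :
    cell h A o l = if ∀ j ∈ l, (j ∈ A ↔ (h j).isSome) then o else none := by
  induction l generalizing o with
  | nil => simp
  | cons j l ih =>
    rw [cell_cons, ih]
    unfold cut
    cases hhj : h j <;> by_cases hj : j ∈ A <;> simp [hj, hhj]

end Primitive

/-- The free left-handed skew Boolean algebra on `n` generators, modelled as the product over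
all `A ⊆ Fin n` of the primitive algebras `A ∪ {0}`. -/
abbrev FreeLSBA (n : ℕ) : Type u := ∀ A : Finset (Fin n), Option (ULift.{u} {i // i ∈ A})

namespace FreeLSBA

variable {n : ℕ}

def gen (i : Fin n) : FreeLSBA.{u} n := fun A => if h : i ∈ A then some ⟨⟨i, h⟩⟩ else none

section Lift

variable {T : Type u} [SBA T] (g : Fin n → T)

def liftAt (A : Finset (Fin n)) (w : FreeLSBA.{u} n) : T :=
  (w A).elim zero fun i => cell g A (g i.down) (List.finRange n)

def lift (w : FreeLSBA.{u} n) : T :=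
  bigVee ((powersetList (List.finRange n)).map fun A => liftAt g A w)

theorem lift_mem {B : Set T} (hB : IsSubalgebra B) (hg : ∀ j, g j ∈ B)
    (w : FreeLSBA.{u} n) : lift g w ∈ B := by
  refine hB.bigVee_mem ?_
  simp only [List.mem_map]
  rintro _ ⟨A, -, rfl⟩
  unfold liftAt
  cases w A with
  | none => exact hB.1
  | some i => exact hB.cell_mem g hg A (hg _) _

variable [LeftHanded T]

theorem isHom_liftAt (A : Finset (Fin n)) : IsHom (liftAt g A) :=
  (isHom_option_elim fun _ j => cell_wedge_cell_eq_self g _ j.down.2 (List.mem_finRange _)).comp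
    (isHom_eval A)

theorem liftAt_wedge_liftAt_eq_zero {A B : Finset (Fin n)} (hAB : A ≠ B) (u v : FreeLSBA.{u} n) :
    liftAt g A u ⋏ liftAt g B v = zero := by
  obtain ⟨k, hk⟩ : ∃ k, ¬(k ∈ A ↔ k ∈ B) := by
    by_contra! h
    exact hAB (Finset.ext h)
  rw [not_iff] at hk
  unfold liftAt
  cases u A with
  | none => exact zero_wedge _
  | some i =>
    cases v B with
    | none => exact wedge_zero _
    | some j =>
      by_cases hkA : k ∈ A
      · exact cell_wedge_cell_eq_zero g _ _ (List.mem_finRange k) hkA fun hkB => hk.mpr hkB hkA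
      · exact wedge_eq_zero_symm
          (cell_wedge_cell_eq_zero g _ _ (List.mem_finRange k) (hk.mp hkA) hkA)

theorem isHom_lift : IsHom (lift g) :=
  isHom_bigVee _ (isHom_liftAt g)
    ((nodup_powersetList (List.nodup_finRange n)).imp (liftAt_wedge_liftAt_eq_zero g))

theorem liftAt_gen (A : Finset (Fin n)) (i : Fin n) :
    liftAt g A (gen i) = cell g A (g i) (List.finRange n) := by
  unfold liftAt gen
  split_ifs with hi
  · rfl
  · exact (cell_eq_zero g (List.mem_finRange i) hi).symm

theorem lift_gen (i : Fin n) : lift g (gen i) = g i := by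
  simp only [lift, liftAt_gen]
  exact bigVee_cell g (g i) (List.nodup_finRange n)

theorem lift_surjective (hg : Generates (Set.range g)) : Function.Surjective (lift g) :=
  (isHom_lift g).surjective_of_generates hg
    (Set.range_subset_iff.mpr fun i => ⟨gen i, lift_gen g i⟩)

end Lift

theorem isSome_gen_apply (i : Fin n) (B : Finset (Fin n)) : (gen.{u} i B).isSome ↔ i ∈ B := by
  unfold gen
  split_ifs with h <;> simp [h]

theorem liftAt_gen_apply (A B : Finset (Fin n)) (w : FreeLSBA.{u} n) :
    liftAt gen A w B = if A = B then w B else none := by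
  unfold liftAt
  cases hw : w A with
  | none =>
    split_ifs with hAB
    · rw [← hAB, hw]; rfl
    · rfl
  | some i =>
    have := (isHom_eval B).map_cell gen A (gen i.down) (List.finRange n)
    simp only [Option.elim] at this ⊢
    rw [this, cell_option]
    simp only [Function.comp, isSome_gen_apply, List.mem_finRange, true_imp_iff, ← Finset.ext_iff]
    split_ifs with hAB
    · subst hAB
      simp [gen, hw, i.down.2]
    · rfl

theorem lift_gen_self (w : FreeLSBA.{u} n) : lift gen w = w := by
  funext B
  have := (isHom_eval B).map_bigVee ((powersetList (List.finRange n)).map fun A => liftAt gen A w)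
  simp only [List.map_map, Function.comp_def, liftAt_gen_apply] at this
  rw [lift, this]
  exact bigVee_map_ite_eq (mem_powersetList.mpr fun j _ => List.mem_finRange j) _

theorem generates_range_gen : Generates (Set.range (gen : Fin n → FreeLSBA.{u} n)) :=
  fun _ hgen h0 hcl => Set.eq_univ_of_forall fun w =>
    lift_gen_self w ▸ lift_mem gen ⟨h0, hcl⟩ (fun j => hgen ⟨j, rfl⟩) w

theorem card_eq : Nat.card (FreeLSBA.{u} n) = ∏ m ∈ Finset.Icc 1 n, (m + 1) ^ n.choose m := by
  rw [Nat.card_eq_fintype_card, Fintype.card_pi]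
  simp only [Fintype.card_option, Fintype.card_ulift, Fintype.card_coe]
  have h := congrArg Additive.toMul (Finset.sum_powerset_apply_card
    (fun m => Additive.ofMul (m + 1)) (x := (Finset.univ : Finset (Fin n))))
  simp only [toMul_sum, toMul_nsmul, toMul_ofMul, Finset.powerset_univ, Finset.card_univ,
    Fintype.card_fin] at h
  rw [h, Finset.prod_range_succ', Nat.choose_zero_right, zero_add, pow_one, mul_one,
    Finset.range_eq_Ico, Finset.prod_Ico_add' (fun m => (m + 1) ^ n.choose m), zero_add,
    Finset.Ico_add_one_right_eq_Icc]

theorem lFreelyGenerates_iff_bijective_lift {n : ℕ} {S : Type u} [SBA S] [LeftHanded S]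
    {x : Fin n → S} (hinj : Function.Injective x) (hgen : Generates (Set.range x)) :
    LFreelyGenerates S (Set.range x) ↔ Function.Bijective (lift x) := by
  refine ⟨fun ⟨_, hfree⟩ => ⟨?_, lift_surjective x hgen⟩, fun hbij => ⟨hgen, fun T _ _ g => ?_⟩⟩
  · obtain ⟨h, hh, hhx⟩ := hfree (FreeLSBA.{u} n) (gen ∘ (Equiv.ofInjective x hinj).symm)
    have hinv : h ∘ lift x = id := (hh.comp (isHom_lift x)).eq_of_generates isHom_id
      generates_range_gen (by
        rintro _ ⟨i, rfl⟩
        simpa [lift_gen] using hhx ⟨x i, i, rfl⟩)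
    exact Function.LeftInverse.injective (congrFun hinv)
  · set e := Equiv.ofBijective _ hbij
    refine ⟨lift (fun i => g ⟨x i, i, rfl⟩) ∘ e.symm,
      (isHom_lift _).comp ((isHom_lift x).symm_ofBijective hbij), ?_⟩
    rintro ⟨_, i, rfl⟩
    have he : e.symm (x i) = gen i := e.symm_apply_eq.mpr (lift_gen x i).symm
    simp only [Function.comp_apply, he, lift_gen]

end FreeLSBA

end SBA

theorem stmt13_general (n : ℕ) (S : Type u) [SBA S] [LeftHanded S]
    (x : Fin n → S) (hinj : Function.Injective x)
    (hgen : Generates (Set.range x)) :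
    Finite S ∧
    Nat.card S ≤ ∏ m ∈ Finset.Icc 1 n, (m + 1) ^ n.choose m ∧
    (Nat.card S = ∏ m ∈ Finset.Icc 1 n, (m + 1) ^ n.choose m ↔
      LFreelyGenerates S (Set.range x)) := by
  have hsurj := FreeLSBA.lift_surjective x hgen
  have hfin : Finite S := Finite.of_surjective _ hsurj
  refine ⟨hfin, FreeLSBA.card_eq ▸ Nat.card_le_card_of_surjective _ hsurj, ?_⟩
  rw [FreeLSBA.lFreelyGenerates_iff_bijective_lift hinj hgen, Nat.bijective_iff_surjective_and_card,
    FreeLSBA.card_eq]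
  exact ⟨fun h => ⟨hsurj, h.symm⟩, fun h => h.2.symm⟩

theorem stmt13 (n : ℕ) (hn : 1 ≤ n) (S : Type u) [SBA S] [LeftHanded S]
    (x : Fin n → S) (hinj : Function.Injective x)
    (hgen : Generates (Set.range x)) :
    Finite S ∧
    Nat.card S ≤ ∏ m ∈ Finset.Icc 1 n, (m + 1) ^ n.choose m ∧
    (Nat.card S = ∏ m ∈ Finset.Icc 1 n, (m + 1) ^ n.choose m ↔
      LFreelyGenerates S (Set.range x)) :=
  stmt13_general n S x hinj hgen
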